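/- Let α ∈ ℕ^n and let A = {u_1,…,u_m} be a set of monomials in S = K[x_1,…,x_n] minimal with respect to divisibility such that K[A] is a homogeneous K-algebra. Then proj.dim(K[A]) ≤ proj.dim(K[A^α]), where proj.dim denotes projective dimension of K[A] as a module over the polynomial ring S_A (respectively of K[A^α] over S_{A^α}). -/

import Mathlib

/-!
Statement 17: `proj.dim_{S_A}(K[A]) ≤ proj.dim_{S_{A^α}}(K[A^α])`, where
`K[A] = S_A / I_A` is viewed as a module over the polynomial ring `S_A`.
The projective dimension is defined as the least `n` admitting a projective
resolution `0 → P_n → ⋯ → P_0 → M → 0` (`⊤` if there is none).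
-/

open MvPolynomial

/-- `π₀`: sum the exponents over the copies of each variable. -/
def pi0 {σ : Type*} [Fintype σ] (α : σ → ℕ) (w : ((i : σ) × Fin (α i)) → ℕ) : σ → ℕ :=
  fun i => ∑ j : Fin (α i), w ⟨i, j⟩

/-- The expansion of a set of exponent vectors with respect to `α`. -/
def expandSet {σ : Type*} [Fintype σ] (α : σ → ℕ) (B : Set (σ → ℕ)) :
    Set (((i : σ) × Fin (α i)) → ℕ) := {w | pi0 α w ∈ B}

/-- The `K`-algebra map `S_A → K[x]`, `y_u ↦ x^u`. -/
noncomputable def toricHom (K : Type*) [Field K] {σ : Type*} [Fintype σ] (A : Set (σ → ℕ)) :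
    MvPolynomial A K →ₐ[K] MvPolynomial σ K :=
  aeval (fun u : A => monomial (Finsupp.equivFunOnFinite.symm u.1) (1 : K))

/-- The toric ideal of a set of exponent vectors. -/
noncomputable def toricIdeal (K : Type*) [Field K] {σ : Type*} [Fintype σ] (A : Set (σ → ℕ)) :
    Ideal (MvPolynomial A K) :=
  RingHom.ker (toricHom K A).toRingHom

/-- `M` has a projective resolution of length at most `n`:
`0 → P_n → ⋯ → P_0 → M → 0`. -/
def HasProjDimLE (R : Type u) [CommRing R] (M : Type v) [AddCommGroup M] [Module R M]
    (n : ℕ) : Prop :=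
  ∃ (P : ℕ → ModuleCat.{u} R) (d : (i : ℕ) → (P (i + 1) →ₗ[R] P i)) (ε : P 0 →ₗ[R] M),
    (∀ i, Module.Projective R (P i)) ∧ Function.Surjective ε ∧
    Function.Exact (d 0) ε ∧ (∀ i, Function.Exact (d (i + 1)) (d i)) ∧
    (∀ i, n < i → Subsingleton (P i))

/-- The projective dimension of an `R`-module `M` (`⊤` if infinite). -/
noncomputable def projDim (R : Type u) [CommRing R] (M : Type v) [AddCommGroup M]
    [Module R M] : ℕ∞ :=
  sInf {e : ℕ∞ | ∃ m : ℕ, e = (m : ℕ∞) ∧ HasProjDimLE R M m}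

section Homological


variable {R : Type u} [CommRing R]

theorem hpdle_of_equiv {M N : Type u} [AddCommGroup M] [Module R M] [AddCommGroup N]
    [Module R N] (e : M ≃ₗ[R] N) {m : ℕ} (h : HasProjDimLE R M m) : HasProjDimLE R N m := by
  obtain ⟨P, d, ε, hproj, hsurj, hex0, hex, hss⟩ := h
  refine ⟨P, d, e.toLinearMap.comp ε, hproj, e.surjective.comp hsurj, ?_, hex, hss⟩
  intro y
  rw [LinearMap.comp_apply, LinearEquiv.coe_coe, LinearEquiv.map_eq_zero_iff]
  exact hex0 y

theorem hpdle_of_projective (M : Type u) [AddCommGroup M] [Module R M]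
    (h : Module.Projective R M) (m : ℕ) : HasProjDimLE R M m := by
  refine ⟨fun i => Nat.rec (ModuleCat.of R M) (fun _ _ => ModuleCat.of R PUnit) i,
    fun _ => 0, LinearMap.id, ?_, Function.surjective_id, ?_, ?_, ?_⟩
  · rintro (_ | i)
    · exact h
    · show Module.Projective R PUnit.{u+1}
      infer_instance
  · intro y
    constructor
    · intro hy
      exact ⟨0, by simpa using hy.symm⟩
    · rintro ⟨x, rfl⟩
      simp only [LinearMap.zero_apply, map_zero]
  · intro i y
    constructor
    · intro _
      exact ⟨0, Subsingleton.elim _ _⟩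
    · intro _
      rfl
  · rintro (_ | i) hi
    · omega
    · exact inferInstanceAs (Subsingleton PUnit)

theorem hpdle_prod {M Q : Type u} [AddCommGroup M] [Module R M] [AddCommGroup Q] [Module R Q]
    (hQ : Module.Projective R Q) {m : ℕ} (h : HasProjDimLE R M m) :
    HasProjDimLE R (M × Q) m := by
  obtain ⟨P, d, ε, hproj, hsurj, hex0, hex, hss⟩ := h
  refine ⟨fun i => Nat.rec (ModuleCat.of R ((P 0) × Q)) (fun j _ => P (j + 1)) i,
    fun i => Nat.rec ((LinearMap.inl R (P 0) Q).comp (d 0)) (fun j _ => d (j + 1)) i,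
    ε.prodMap LinearMap.id, ?_, ?_, ?_, ?_, ?_⟩
  · rintro (_ | i)
    · have := hproj 0
      exact inferInstanceAs (Module.Projective R ((P 0) × Q))
    · exact hproj (i + 1)
  · rintro ⟨a, b⟩
    obtain ⟨x, hx⟩ := hsurj a
    refine ⟨(x, b), ?_⟩
    show (ε x, b) = (a, b)
    rw [hx]
  · rintro ⟨a, b⟩
    constructor
    · intro hy
      have ha : ε a = 0 := congrArg Prod.fst hy
      have hb : (0 : Q) = b := (congrArg Prod.snd hy).symm
      obtain ⟨x, hx⟩ := (hex0 a).mp ha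
      refine ⟨x, ?_⟩
      show ((d 0) x, (0 : Q)) = (a, b)
      rw [hx, hb]
    · rintro ⟨x, hx⟩
      have h1 : (d 0) x = a := congrArg Prod.fst hx
      have h2 : (0 : Q) = b := congrArg Prod.snd hx
      have : ε a = 0 := (hex0 a).mpr ⟨x, h1⟩
      show (ε a, b) = 0
      rw [this, ← h2]
      rfl
  · rintro (_ | i) y
    · constructor
      · intro hy
        have h1 : d 0 y = 0 := congrArg Prod.fst hy
        exact (hex 0 y).mp h1
      · rintro ⟨x, rfl⟩
        show ((LinearMap.inl R (P 0) Q).comp (d 0)) ((d 1) x) = 0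
        have : (d 0) ((d 1) x) = 0 := (hex 0 _).mpr ⟨x, rfl⟩
        simp only [LinearMap.comp_apply, LinearMap.inl_apply, this]
        rfl
    · exact hex (i + 1) y
  · rintro (_ | i) hi
    · omega
    · exact hss (i + 1) hi

open LinearMap

/-- A split surjection decomposes the source as product of target and kernel. -/
noncomputable def splitEquiv {X M : Type*} [AddCommGroup X] [Module R X] [AddCommGroup M]
    [Module R M] (g : X →ₗ[R] M) (s : M →ₗ[R] X) (hgs : ∀ y, g (s y) = y) :
    X ≃ₗ[R] M × LinearMap.ker g where
  toFun x := (g x, ⟨x - s (g x), by simp [hgs]⟩)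
  invFun y := s y.1 + y.2.1
  map_add' a b := by
    ext
    · simp
    · simp; abel
  map_smul' r a := by
    ext
    · simp
    · simp [smul_sub]
  left_inv x := by simp
  right_inv y := by
    ext
    · simp [hgs, y.2.2]
    · simp [hgs, y.2.2]

noncomputable def kerProdEquiv {M N M₂ N₂ : Type*} [AddCommGroup M] [Module R M]
    [AddCommGroup N] [Module R N] [AddCommGroup M₂] [Module R M₂] [AddCommGroup N₂]
    [Module R N₂] (f : M →ₗ[R] M₂) (g : N →ₗ[R] N₂) :
    LinearMap.ker (f.prodMap g) ≃ₗ[R] LinearMap.ker f × LinearMap.ker g where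
  toFun x := (⟨x.1.1, LinearMap.mem_ker.mpr
                (congrArg Prod.fst (LinearMap.mem_ker.mp x.2) : f x.1.1 = 0)⟩,
              ⟨x.1.2, LinearMap.mem_ker.mpr
                (congrArg Prod.snd (LinearMap.mem_ker.mp x.2) : g x.1.2 = 0)⟩)
  invFun y := ⟨(y.1.1, y.2.1), by simp [LinearMap.mem_ker, Prod.ext_iff, y.1.2, y.2.2]⟩
  map_add' a b := by ext <;> rfl
  map_smul' r a := by ext <;> rfl
  left_inv x := rfl
  right_inv y := rfl

/-- Schanuel's lemma. -/
theorem schanuel {P P' M : Type u} [AddCommGroup P] [Module R P] [AddCommGroup P'] [Module R P']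
    [AddCommGroup M] [Module R M] (hP : Module.Projective R P) (hP' : Module.Projective R P')
    (g : P →ₗ[R] M) (g' : P' →ₗ[R] M) (hg : Function.Surjective g)
    (hg' : Function.Surjective g') :
    Nonempty ((LinearMap.ker g × P') ≃ₗ[R] (LinearMap.ker g' × P)) := by
  set h : P × P' →ₗ[R] M := g.comp (fst R P P') - g'.comp (snd R P P') with hh
  set X := LinearMap.ker h with hX
  have hmem : ∀ p p', ((p, p') ∈ X) ↔ g p = g' p' := by
    intro p p'
    simp [hX, hh, LinearMap.mem_ker, sub_eq_zero]
  set π : X →ₗ[R] P := (fst R P P').comp X.subtype with hπ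
  set π' : X →ₗ[R] P' := (snd R P P').comp X.subtype with hπ'
  have hπs : Function.Surjective π := by
    intro p
    obtain ⟨p', hp'⟩ := hg' (g p)
    exact ⟨⟨(p, p'), (hmem p p').mpr hp'.symm⟩, rfl⟩
  have hπ's : Function.Surjective π' := by
    intro p'
    obtain ⟨p, hp⟩ := hg (g' p')
    exact ⟨⟨(p, p'), (hmem p p').mpr hp⟩, rfl⟩
  obtain ⟨s, hs⟩ := Module.projective_lifting_property π (LinearMap.id) hπs
  obtain ⟨s', hs'⟩ := Module.projective_lifting_property π' (LinearMap.id) hπ's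
  have hs1 : ∀ y, π (s y) = y := fun y => congrArg (fun f => f y) (congrArg DFunLike.coe hs)
  have hs'1 : ∀ y, π' (s' y) = y := fun y => congrArg (fun f => f y) (congrArg DFunLike.coe hs')
  have e1 : X ≃ₗ[R] P × LinearMap.ker π := splitEquiv π s hs1
  have e1' : X ≃ₗ[R] P' × LinearMap.ker π' := splitEquiv π' s' hs'1
  have e2 : LinearMap.ker π ≃ₗ[R] LinearMap.ker g' := by
    refine LinearEquiv.ofLinear
      (LinearMap.codRestrict _ (π'.comp (LinearMap.ker π).subtype) ?_)
      (LinearMap.codRestrict _ ?_ ?_) ?_ ?_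
    · rintro ⟨⟨⟨p, p'⟩, hx⟩, hk⟩
      have hp : p = 0 := hk
      have := (hmem p p').mp hx
      rw [hp, map_zero] at this
      exact LinearMap.mem_ker.mpr this.symm
    · exact LinearMap.codRestrict X ((LinearMap.inr R P P').comp (LinearMap.ker g').subtype)
        (by rintro ⟨p', hp'⟩; exact (hmem 0 p').mpr (by simp [LinearMap.mem_ker.mp hp']))
    · rintro ⟨p', hp'⟩
      rfl
    · ext ⟨p', hp'⟩
      rfl
    · apply LinearMap.ext
      rintro ⟨⟨⟨p, p'⟩, hx⟩, hk⟩
      have hp : p = 0 := hk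
      apply Subtype.ext
      apply Subtype.ext
      show ((0 : P), p') = (p, p')
      rw [hp]
  have e2' : LinearMap.ker π' ≃ₗ[R] LinearMap.ker g := by
    refine LinearEquiv.ofLinear
      (LinearMap.codRestrict _ (π.comp (LinearMap.ker π').subtype) ?_)
      (LinearMap.codRestrict _ ?_ ?_) ?_ ?_
    · rintro ⟨⟨⟨p, p'⟩, hx⟩, hk⟩
      have hp' : p' = 0 := hk
      have := (hmem p p').mp hx
      rw [hp', map_zero] at this
      exact LinearMap.mem_ker.mpr this
    · exact LinearMap.codRestrict X ((LinearMap.inl R P P').comp (LinearMap.ker g).subtype)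
        (by rintro ⟨p, hp⟩; exact (hmem p 0).mpr (by simp [LinearMap.mem_ker.mp hp]))
    · rintro ⟨p, hp⟩
      rfl
    · ext ⟨p, hp⟩
      rfl
    · apply LinearMap.ext
      rintro ⟨⟨⟨p, p'⟩, hx⟩, hk⟩
      have hp' : p' = 0 := hk
      apply Subtype.ext
      apply Subtype.ext
      show (p, (0 : P')) = (p, p')
      rw [hp']
  exact ⟨(LinearEquiv.prodComm R _ _).trans <|
    (LinearEquiv.prodCongr (LinearEquiv.refl R P') e2'.symm).trans <|
    e1'.symm.trans <| e1.trans <|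
    (LinearEquiv.prodCongr (LinearEquiv.refl R P) e2).trans
    (LinearEquiv.prodComm R _ _)⟩

/-- Splice a projective cover onto a resolution of its kernel. -/
theorem hpdle_splice {M F : Type u} [AddCommGroup M] [Module R M] [AddCommGroup F] [Module R F]
    (hF : Module.Projective R F) (p : F →ₗ[R] M) (hp : Function.Surjective p) {m : ℕ}
    (h : HasProjDimLE R (LinearMap.ker p) m) : HasProjDimLE R M (m + 1) := by
  obtain ⟨Q, dq, εq, hprojq, hsurjq, hex0q, hexq, hssq⟩ := h
  refine ⟨fun i => Nat.rec (ModuleCat.of R F) (fun j _ => Q j) i,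
    fun i => Nat.rec ((LinearMap.ker p).subtype.comp εq) (fun j _ => dq j) i,
    p, ?_, hp, ?_, ?_, ?_⟩
  · rintro (_ | i)
    · exact hF
    · exact hprojq i
  · intro y
    constructor
    · intro hy
      obtain ⟨x, hx⟩ := hsurjq ⟨y, LinearMap.mem_ker.mpr hy⟩
      refine ⟨x, ?_⟩
      show ((LinearMap.ker p).subtype) (εq x) = y
      rw [hx]
      rfl
    · rintro ⟨x, rfl⟩
      exact LinearMap.mem_ker.mp (εq x).2
  · rintro (_ | i) y
    · constructor
      · intro hy
        have hy' : ((LinearMap.ker p).subtype) (εq y) = 0 := hy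
        have : εq y = 0 := Subtype.ext hy'
        exact (hex0q y).mp this
      · rintro ⟨x, rfl⟩
        have : εq ((dq 0) x) = 0 := (hex0q _).mpr ⟨x, rfl⟩
        show ((LinearMap.ker p).subtype) (εq ((dq 0) x)) = 0
        rw [this, map_zero]
    · exact hexq i y
  · rintro (_ | i) hi
    · omega
    · exact hssq i (by omega)

theorem hpdle_of_prod_left (m : ℕ) :
    ∀ (M C : Type u) [AddCommGroup M] [Module R M] [AddCommGroup C] [Module R C],
      HasProjDimLE R (M × C) m → HasProjDimLE R M m := by
  induction m with
  | zero =>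
    intro M C _ _ _ _ h
    obtain ⟨P, d, ε, hproj, hsurj, hex0, hex, hss⟩ := h
    have hinj : Function.Injective ε := by
      rw [← LinearMap.ker_eq_bot]
      apply (Submodule.eq_bot_iff _).mpr
      intro y hy
      obtain ⟨x, hx⟩ := (hex0 y).mp (LinearMap.mem_ker.mp hy)
      have : Subsingleton (P 1) := hss 1 one_pos
      rw [← hx, (Subsingleton.elim x 0), map_zero]
    have e : P 0 ≃ₗ[R] M × C := LinearEquiv.ofBijective ε ⟨hinj, hsurj⟩
    have hMC : Module.Projective R (M × C) := by
      have := hproj 0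
      exact Module.Projective.of_equiv e
    have hM : Module.Projective R M :=
      Module.Projective.of_split (LinearMap.inl R M C) (LinearMap.fst R M C) rfl
    exact hpdle_of_projective M hM 0
  | succ m ih =>
    intro M C _ _ _ _ h
    obtain ⟨P, d, ε, hproj, hsurj, hex0, hex, hss⟩ := h
    -- the kernel of ε has projective dimension ≤ m
    have hker : HasProjDimLE R (LinearMap.ker ε) m := by
      refine ⟨fun i => P (i + 1), fun i => d (i + 1),
        (d 0).codRestrict (LinearMap.ker ε) (fun x => LinearMap.mem_ker.mpr
          ((hex0 _).mpr ⟨x, rfl⟩)), fun i => hproj (i + 1), ?_, ?_,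
        fun i => hex (i + 1), fun i hi => hss (i + 1) (by omega)⟩
      · rintro ⟨y, hy⟩
        obtain ⟨x, hx⟩ := (hex0 y).mp (LinearMap.mem_ker.mp hy)
        exact ⟨x, Subtype.ext hx⟩
      · intro y
        constructor
        · intro hy
          have : (d 0) y = 0 := by
            have := congrArg (Submodule.subtype _) hy
            simpa using this
          exact (hex 0 y).mp this
        · rintro ⟨x, rfl⟩
          exact Subtype.ext ((hex 0 _).mpr ⟨x, rfl⟩)
    -- free covers of M and C
    set sM : (M →₀ R) →ₗ[R] M := Finsupp.linearCombination R (fun a => a) with hsM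
    set sC : (C →₀ R) →ₗ[R] C := Finsupp.linearCombination R (fun a => a) with hsC
    have hsMs : Function.Surjective sM := fun a => ⟨Finsupp.single a 1, by simp [hsM]⟩
    have hsCs : Function.Surjective sC := fun a => ⟨Finsupp.single a 1, by simp [hsC]⟩
    have hg' : Function.Surjective (sM.prodMap sC) := Function.Surjective.prodMap hsMs hsCs
    obtain ⟨esch⟩ := schanuel (hproj 0) inferInstance ε (sM.prodMap sC) hsurj hg'
    -- `ker ε × (F_M × F_C)` has projective dimension ≤ m
    have h1 : HasProjDimLE R (LinearMap.ker ε × ((M →₀ R) × (C →₀ R))) m :=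
      hpdle_prod inferInstance hker
    have h2 : HasProjDimLE R (LinearMap.ker sM × (LinearMap.ker sC × P 0)) m := by
      refine hpdle_of_equiv ?_ h1
      exact esch.trans <| ((kerProdEquiv sM sC).prodCongr (LinearEquiv.refl R (P 0))).trans
        (LinearEquiv.prodAssoc R _ _ _)
    have h3 : HasProjDimLE R (LinearMap.ker sM) m := ih _ _ h2
    exact hpdle_splice inferInstance sM hsMs h3

/-- A retract of a module of projective dimension at most `m` has projective
dimension at most `m`. -/
theorem hpdle_retract {M N : Type u} [AddCommGroup M] [Module R M] [AddCommGroup N]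
    [Module R N] (f : M →ₗ[R] N) (g : N →ₗ[R] M) (hgf : ∀ x, g (f x) = x) {m : ℕ}
    (h : HasProjDimLE R N m) : HasProjDimLE R M m :=
  hpdle_of_prod_left m M (LinearMap.ker g) (hpdle_of_equiv (splitEquiv g f hgf) h)

end Homological

universe u v

theorem projective_trans (R S M : Type*) [CommRing R] [CommRing S] [Algebra R S]
    [AddCommGroup M] [Module R M] [Module S M] [IsScalarTower R S M]
    [Module.Free R S] [hM : Module.Projective S M] : Module.Projective R M := by
  obtain ⟨s, hs⟩ := hM
  refine Module.Projective.of_split (M := M →₀ S)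
    (s.restrictScalars R) ((Finsupp.linearCombination S _root_.id).restrictScalars R) ?_
  ext m
  exact hs m

theorem tower_restrict {R R' : Type u} [CommRing R] [CommRing R'] [Algebra R R']
    (X : ModuleCat.{u} R') :
    IsScalarTower R R' ((ModuleCat.restrictScalars (algebraMap R R')).obj X) := by
  constructor
  intro r s x
  show (r • s) • x = (algebraMap R R' r) • (s • x)
  rw [Algebra.smul_def, mul_smul]

theorem hpdle_restrict {R R' : Type u} [CommRing R] [CommRing R'] [Algebra R R']
    [Module.Free R R'] {N : ModuleCat.{u} R'} {m : ℕ} (h : HasProjDimLE R' N m) :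
    HasProjDimLE R ((ModuleCat.restrictScalars (algebraMap R R')).obj N) m := by
  obtain ⟨P, d, ε, hproj, hsurj, hex0, hex, hss⟩ := h
  refine ⟨fun i => (ModuleCat.restrictScalars (algebraMap R R')).obj (P i),
    fun i => ((ModuleCat.restrictScalars (algebraMap R R')).map (ModuleCat.ofHom (d i))).hom,
    ((ModuleCat.restrictScalars (algebraMap R R')).map (ModuleCat.ofHom ε : ModuleCat.of R' ↑(P 0) ⟶ N)).hom, ?_, hsurj, hex0, hex, hss⟩
  · intro i
    haveI := tower_restrict (R := R) (P i)
    haveI : Module.Projective R' ((ModuleCat.restrictScalars (algebraMap R R')).obj (P i)) :=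
      hproj i
    exact projective_trans R R' _

section Expansion

variable {n : ℕ} (K : Type*) [Field K] (α : Fin n → ℕ) (hα : ∀ i, 0 < α i)
  (A : Set (Fin n → ℕ))

/-- The embedding of variables `x_i ↦ x_{i,0}`. -/
def emb0 : Fin n → (i : Fin n) × Fin (α i) := fun i => ⟨i, ⟨0, hα i⟩⟩

lemma emb0_injective : Function.Injective (emb0 α hα) := by
  intro i j h
  exact congrArg Sigma.fst h

/-- The canonical expansion of an exponent vector, supported on the `0`-th copies. -/
def hatu (u : Fin n → ℕ) : ((i : Fin n) × Fin (α i)) → ℕ :=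
  fun p => if p.2 = ⟨0, hα p.1⟩ then u p.1 else 0

lemma pi0_hatu (u : Fin n → ℕ) : pi0 α (hatu α hα u) = u := by
  funext i
  simp only [pi0, hatu]
  rw [Finset.sum_ite_eq' Finset.univ (⟨0, hα i⟩ : Fin (α i)) (fun _ => u i)]
  simp

lemma mapDomain_emb0 (u : Fin n → ℕ) :
    Finsupp.mapDomain (emb0 α hα) (Finsupp.equivFunOnFinite.symm u)
      = Finsupp.equivFunOnFinite.symm (hatu α hα u) := by
  apply Finsupp.ext
  rintro ⟨i, j⟩
  by_cases hj : j = (⟨0, hα i⟩ : Fin (α i))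
  · subst hj
    rw [show (⟨i, ⟨0, hα i⟩⟩ : (i : Fin n) × Fin (α i)) = emb0 α hα i from rfl,
      Finsupp.mapDomain_apply (emb0_injective α hα)]
    simp [hatu, emb0]
  · rw [Finsupp.mapDomain_notin_range]
    · simp [hatu, hj, Finsupp.equivFunOnFinite, Finsupp.coe_mk]
      exact (if_neg hj).symm
    · rintro ⟨i', hi'⟩
      obtain ⟨h1, h2⟩ := Sigma.mk.inj_iff.mp hi'
      subst h1
      exact hj (eq_of_heq h2).symm

lemma mapDomain_fst (w : ((i : Fin n) × Fin (α i)) → ℕ) :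
    Finsupp.mapDomain (Sigma.fst : ((i : Fin n) × Fin (α i)) → Fin n)
        (Finsupp.equivFunOnFinite.symm w)
      = Finsupp.equivFunOnFinite.symm (pi0 α w) := by
  apply Finsupp.ext
  intro i
  rw [Finsupp.mapDomain, Finsupp.sum_apply, Finsupp.sum]
  simp only [Finsupp.single_apply]
  rw [Finset.sum_subset (Finset.subset_univ _) (by
    intro x _ hx
    simp only [Finsupp.notMem_support_iff] at hx
    simp [hx])]
  show (∑ x : (i : Fin n) × Fin (α i), if x.1 = i then w x else 0) = pi0 α w i
  rw [← Finset.univ_sigma_univ, Finset.sum_sigma]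
  rw [Finset.sum_eq_single i]
  · simp [pi0]
  · intro b _ hb
    simp [hb]
  · intro h
    exact absurd (Finset.mem_univ i) h

variable {A}

/-- Embedding `A → A^α`. -/
def embA : A → expandSet α A := fun u =>
  ⟨hatu α hα u.1, show pi0 α (hatu α hα u.1) ∈ A by rw [pi0_hatu]; exact u.2⟩

lemma embA_injective : Function.Injective (embA α hα (A := A)) := by
  intro u v h
  apply Subtype.ext
  have h2 := congrArg (fun w => pi0 α w.1) h
  simpa only [embA, pi0_hatu] using h2

/-- Projection `A^α → A`. -/
def projA : expandSet α A → A := fun w => ⟨pi0 α w.1, w.2⟩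

lemma projA_embA (u : A) : projA α (embA α hα u) = u :=
  Subtype.ext (pi0_hatu α hα u.1)

variable (A)

/-- `ι : S_A → S_{A^α}`. -/
noncomputable def iotaHom : MvPolynomial A K →ₐ[K] MvPolynomial (expandSet α A) K :=
  aeval (fun u : A => X (embA α hα u))

/-- `φ : S_{A^α} → S_A`. -/
noncomputable def phiHom : MvPolynomial (expandSet α A) K →ₐ[K] MvPolynomial A K :=
  aeval (fun w : expandSet α A => X (projA α w))

lemma phi_comp_iota : (phiHom K α A).comp (iotaHom K α hα A) = AlgHom.id K _ := by
  apply MvPolynomial.algHom_ext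
  intro u
  simp [iotaHom, phiHom, projA_embA]

lemma square_iota :
    (toricHom K (expandSet α A)).comp (iotaHom K α hα A)
      = (rename (emb0 α hα)).comp (toricHom K A) := by
  apply MvPolynomial.algHom_ext
  intro u
  simp only [AlgHom.comp_apply, iotaHom, toricHom, aeval_X, rename_monomial]
  rw [mapDomain_emb0]
  rfl

lemma square_phi :
    (toricHom K A).comp (phiHom K α A)
      = (rename (Sigma.fst : ((i : Fin n) × Fin (α i)) → Fin n)).comp
          (toricHom K (expandSet α A)) := by
  apply MvPolynomial.algHom_ext
  intro w
  simp only [AlgHom.comp_apply, phiHom, toricHom, aeval_X, rename_monomial]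
  rw [mapDomain_fst]
  rfl

lemma iota_ideal (f : MvPolynomial A K) (hf : f ∈ toricIdeal K A) :
    iotaHom K α hα A f ∈ toricIdeal K (expandSet α A) := by
  have := congrArg (fun g => g f) (congrArg DFunLike.coe (square_iota K α hα A))
  simp only [AlgHom.comp_apply] at this
  show toricHom K (expandSet α A) (iotaHom K α hα A f) = 0
  rw [this, show toricHom K A f = 0 from hf, map_zero]

lemma phi_ideal (f : MvPolynomial (expandSet α A) K) (hf : f ∈ toricIdeal K (expandSet α A)) :
    phiHom K α A f ∈ toricIdeal K A := by
  have := congrArg (fun g => g f) (congrArg DFunLike.coe (square_phi K α A))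
  simp only [AlgHom.comp_apply] at this
  show toricHom K A (phiHom K α A f) = 0
  rw [this, show toricHom K (expandSet α A) f = 0 from hf, map_zero]

end Expansion

section FreePart

variable {n : ℕ} (K : Type*) [Field K] (α : Fin n → ℕ) (hα : ∀ i, 0 < α i)
  (A : Set (Fin n → ℕ))

lemma free_over_iota :
    letI : Algebra (MvPolynomial A K) (MvPolynomial (expandSet α A) K) :=
      (iotaHom K α hα A).toRingHom.toAlgebra
    Module.Free (MvPolynomial A K) (MvPolynomial (expandSet α A) K) := by
  letI : Algebra (MvPolynomial A K) (MvPolynomial (expandSet α A) K) :=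
    (iotaHom K α hα A).toRingHom.toAlgebra
  classical
  set R := MvPolynomial A K with hR
  let Bc := ((Set.range (embA α hα (A := A)))ᶜ : Set (expandSet α A))
  let e : ((Bc : Set _) ⊕ A) ≃ (expandSet α A) :=
    (Equiv.sumCongr (Equiv.refl Bc) (Equiv.ofInjective _ (embA_injective α hα))).trans
      ((Equiv.sumComm _ _).trans (Equiv.Set.sumCompl (Set.range (embA α hα))))
  let ψ : MvPolynomial (expandSet α A) K ≃ₐ[K] MvPolynomial Bc R :=
    (renameEquiv K e.symm).trans (sumAlgEquiv K Bc A)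
  have hkey : ∀ u : A, ψ (X (embA α hα u)) = C (X u) := by
    intro u
    have he : e (Sum.inr u) = embA α hα u := by
      simp [e, Equiv.Set.sumCompl, Equiv.sumCompl_apply_inl]
      rfl
    have he' : e.symm (embA α hα u) = Sum.inr u := by
      rw [Equiv.symm_apply_eq, he]
    show (sumAlgEquiv K Bc A) ((renameEquiv K e.symm) (X (embA α hα u))) = C (X u)
    rw [renameEquiv_apply, rename_X, he']
    simp
  have hC : ∀ r : R, ψ (iotaHom K α hα A r) = C r := by
    intro r
    have : (ψ.toAlgHom.comp (iotaHom K α hα A)) = IsScalarTower.toAlgHom K R (MvPolynomial Bc R) := by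
      apply MvPolynomial.algHom_ext
      intro u
      simp only [AlgHom.comp_apply, iotaHom, aeval_X, AlgEquiv.toAlgHom_eq_coe, AlgHom.coe_coe]
      refine (hkey u).trans ?_
      rfl
    have := congrArg (fun g => g r) (congrArg DFunLike.coe this)
    simpa using this
  let lψ : MvPolynomial (expandSet α A) K ≃ₗ[R] MvPolynomial Bc R :=
    { ψ.toAddEquiv with
      map_smul' := by
        intro r x
        show ψ (r • x) = r • ψ x
        rw [Algebra.smul_def, Algebra.smul_def, RingHom.algebraMap_toAlgebra, map_mul]
        rw [show (algebraMap R (MvPolynomial Bc R)) r = C r from rfl]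
        rw [show ((iotaHom K α hα A).toRingHom r : MvPolynomial (expandSet α A) K)
          = iotaHom K α hα A r from rfl, hC] }
  exact Module.Free.of_equiv lψ.symm

end FreePart

theorem projDim_toricRing_le_projDim_expansion
    (n : ℕ) (K : Type*) [Field K] (α : Fin n → ℕ) (hα : ∀ i, 0 < α i)
    (A : Set (Fin n → ℕ)) (hne : A.Nonempty) (hfin : A.Finite)
    (hmin : IsAntichain (· ≤ ·) A)
    (d : ℕ) (hd : ∀ u ∈ A, ∑ j, u j = d) :
    projDim (MvPolynomial A K) (MvPolynomial A K ⧸ toricIdeal K A)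
      ≤ projDim (MvPolynomial (expandSet α A) K)
          (MvPolynomial (expandSet α A) K ⧸ toricIdeal K (expandSet α A)) := by
  classical
  letI : Algebra (MvPolynomial A K) (MvPolynomial (expandSet α A) K) :=
    (iotaHom K α hα A).toRingHom.toAlgebra
  haveI : Module.Free (MvPolynomial A K) (MvPolynomial (expandSet α A) K) :=
    free_over_iota K α hα A
  set R := MvPolynomial A K
  set R' := MvPolynomial (expandSet α A) K
  set I := toricIdeal K A
  set I' := toricIdeal K (expandSet α A)
  have hφι : ∀ f : R, phiHom K α A (iotaHom K α hα A f) = f := by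
    intro f
    have := congrArg (fun g => g f) (congrArg DFunLike.coe (phi_comp_iota K α hα A))
    exact this
  -- the ring homomorphisms between the two toric rings
  let fq : R ⧸ I →+* R' ⧸ I' :=
    Ideal.Quotient.lift I ((Ideal.Quotient.mk I').comp (iotaHom K α hα A).toRingHom)
      (fun a ha => by
        rw [RingHom.comp_apply, Ideal.Quotient.eq_zero_iff_mem]
        exact iota_ideal K α hα A a ha)
  let gq : R' ⧸ I' →+* R ⧸ I :=
    Ideal.Quotient.lift I' ((Ideal.Quotient.mk I).comp (phiHom K α A).toRingHom)
      (fun a ha => by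
        rw [RingHom.comp_apply, Ideal.Quotient.eq_zero_iff_mem]
        exact phi_ideal K α A a ha)
  apply sInf_le_sInf
  rintro e ⟨m, rfl, hm⟩
  refine ⟨m, rfl, ?_⟩
  have h1 : HasProjDimLE R' (ModuleCat.of R' (R' ⧸ I')) m := hm
  have h2 : HasProjDimLE R
      ((ModuleCat.restrictScalars (algebraMap R R')).obj (ModuleCat.of R' (R' ⧸ I'))) m :=
    hpdle_restrict h1
  -- the retraction, as `R`-linear maps
  let fℓ : (R ⧸ I) →ₗ[R]
      ((ModuleCat.restrictScalars (algebraMap R R')).obj (ModuleCat.of R' (R' ⧸ I'))) :=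
    { toFun := fq
      map_add' := fq.map_add
      map_smul' := by
        intro r x
        obtain ⟨a, rfl⟩ := Ideal.Quotient.mk_surjective (I := I) x
        have h3 : r • (Ideal.Quotient.mk I a) = Ideal.Quotient.mk I (r * a) := rfl
        rw [h3]
        show fq (Ideal.Quotient.mk I (r * a))
          = (algebraMap R R') r • (fq (Ideal.Quotient.mk I a))
        have h4 : ∀ b : R, fq (Ideal.Quotient.mk I b)
            = Ideal.Quotient.mk I' (iotaHom K α hα A b) := fun b => rfl
        rw [h4, h4, map_mul]
        show _ = (iotaHom K α hα A r) • _
        rfl }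
  let gℓ : ((ModuleCat.restrictScalars (algebraMap R R')).obj (ModuleCat.of R' (R' ⧸ I')))
      →ₗ[R] (R ⧸ I) :=
    { toFun := gq
      map_add' := gq.map_add
      map_smul' := by
        intro r x
        obtain ⟨b, rfl⟩ := Ideal.Quotient.mk_surjective (I := I') x
        have h4 : ∀ c : R', gq (Ideal.Quotient.mk I' c)
            = Ideal.Quotient.mk I (phiHom K α A c) := fun c => rfl
        show gq (r • (Ideal.Quotient.mk I' b)) = r • gq (Ideal.Quotient.mk I' b)
        have h3 : r • ((Ideal.Quotient.mk I' b) :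
            ((ModuleCat.restrictScalars (algebraMap R R')).obj (ModuleCat.of R' (R' ⧸ I'))))
            = Ideal.Quotient.mk I' ((iotaHom K α hα A) r * b) := rfl
        rw [h3, h4, h4, map_mul,
          show phiHom K α A ((iotaHom K α hα A) r) = r from hφι r]
        rfl }
  have hgf : ∀ x, gℓ (fℓ x) = x := by
    intro x
    obtain ⟨a, rfl⟩ := Ideal.Quotient.mk_surjective (I := I) x
    show Ideal.Quotient.mk I (phiHom K α A (iotaHom K α hα A a)) = Ideal.Quotient.mk I a
    rw [hφι a]
  exact hpdle_retract fℓ gℓ hgf h2
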